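/- arXiv:1703.05549 — 7 statements merged into one kernel-verified Lean document; each statement's English description precedes it below -/
import Mathlib

section
/- Let x, b1, b2, t1, t2, m be points in the Euclidean plane ℝ² with b2 ≠ x and t2 ≠ x, let δ := ∠(b2, x, t2), and assume b1 lies on the segment from x to b2, t1 lies on the segment from x to t2, and m lies in the convex hull of {b1, b2, t2, t1}. Let Φ := dist(b1, m) + dist(t1, m) + dist(b2, m) + dist(t2, m) and Ψ := dist(b1, b2) + dist(t1, t2). Then Φ − Ψ ≥ ((1 − cos(δ/2)) · sin(δ/2) / (1 + sin(δ/2))) · (dist(b1, m) + dist(t1, m)). -/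
open Real EuclideanGeometry

section Aux

variable {E : Type*} [NormedAddCommGroup E] [InnerProductSpace ℝ E]

local notation "⟪" a ", " b "⟫" => @inner ℝ _ _ a b

private lemma aux_proj (x m w0 : E) (hw0 : w0 ≠ 0) :
    dist (x + w0) m ≥ ‖w0‖ - ⟪m - x, ‖w0‖⁻¹ • w0⟫ := by
  set w := ‖w0‖⁻¹ • w0 with hw
  have hnw : ‖w‖ = 1 := norm_smul_inv_norm hw0
  have h1 : ⟪x + w0 - m, w⟫ ≤ ‖x + w0 - m‖ * ‖w‖ := real_inner_le_norm _ _
  have h2 : ⟪x + w0 - m, w⟫ = ⟪w0, w⟫ - ⟪m - x, w⟫ := by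
    have h : x + w0 - m = w0 - (m - x) := by abel
    rw [h, inner_sub_left]
  have h3 : ⟪w0, w⟫ = ‖w0‖ := by
    rw [hw, real_inner_smul_right, real_inner_self_eq_norm_sq, sq]
    exact inv_mul_cancel_left₀ (norm_ne_zero_iff.2 hw0) _
  have h4 : dist (x + w0) m = ‖x + w0 - m‖ := by rw [dist_eq_norm]
  rw [h4]
  rw [hnw, mul_one] at h1
  linarith [h1, h2, h3]

private lemma aux_norm_add (u v : E) (hnu : ‖u‖ = 1) (hnv : ‖v‖ = 1) (c : ℝ) (hc : 0 ≤ c)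
    (huv : ⟪u, v⟫ = 2 * c ^ 2 - 1) : ‖u + v‖ = 2 * c := by
  have h2 : ‖u + v‖ ^ 2 = (2 * c) ^ 2 := by
    rw [norm_add_sq_real, hnu, hnv, huv]; ring
  have h3 : 0 ≤ ‖u + v‖ := norm_nonneg _
  nlinarith [h2, h3]

private lemma aux_inner_split (a u v : E) : ⟪a, u⟫ + ⟪a, v⟫ = ⟪a, u + v⟫ :=
  (inner_add_right a u v).symm

private lemma aux_CS (a b : E) : ⟪a, b⟫ ≤ ‖a‖ * ‖b‖ := real_inner_le_norm a b

end Aux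

theorem quadrilateral_detour_bound
    (x b1 b2 t1 t2 m : EuclideanSpace ℝ (Fin 2))
    (hb2 : b2 ≠ x) (ht2 : t2 ≠ x)
    (hb1 : b1 ∈ segment ℝ x b2) (ht1 : t1 ∈ segment ℝ x t2)
    (hm : m ∈ convexHull ℝ ({b1, b2, t2, t1} : Set (EuclideanSpace ℝ (Fin 2)))) :
    let δ := EuclideanGeometry.angle b2 x t2
    (dist b1 m + dist t1 m + dist b2 m + dist t2 m) - (dist b1 b2 + dist t1 t2) ≥
      ((1 - Real.cos (δ / 2)) * Real.sin (δ / 2) / (1 + Real.sin (δ / 2))) *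
        (dist b1 m + dist t1 m) := by
  intro δ
  have hδ0 : 0 ≤ δ := EuclideanGeometry.angle_nonneg _ _ _
  have hδπ : δ ≤ π := EuclideanGeometry.angle_le_pi _ _ _
  have hc0 : 0 ≤ Real.cos (δ / 2) := Real.cos_nonneg_of_mem_Icc ⟨by linarith, by linarith⟩
  have hc1 : Real.cos (δ / 2) ≤ 1 := Real.cos_le_one _
  have hs0 : 0 ≤ Real.sin (δ / 2) := Real.sin_nonneg_of_nonneg_of_le_pi (by linarith) (by linarith)
  have hs1 : Real.sin (δ / 2) ≤ 1 := Real.sin_le_one _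
  set u' : EuclideanSpace ℝ (Fin 2) := b2 - x with hu'
  set v' : EuclideanSpace ℝ (Fin 2) := t2 - x with hv'
  have hu'0 : u' ≠ 0 := sub_ne_zero.2 hb2
  have hv'0 : v' ≠ 0 := sub_ne_zero.2 ht2
  set u : EuclideanSpace ℝ (Fin 2) := ‖u'‖⁻¹ • u' with hu
  set v : EuclideanSpace ℝ (Fin 2) := ‖v'‖⁻¹ • v' with hv
  have hnu : ‖u‖ = 1 := norm_smul_inv_norm hu'0
  have hnv : ‖v‖ = 1 := norm_smul_inv_norm hv'0
  have hcosδ : Real.cos δ = @inner ℝ _ _ u v := by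
    have hδeq : δ = InnerProductGeometry.angle u' v' := by
      show EuclideanGeometry.angle b2 x t2 = _
      rw [EuclideanGeometry.angle]
      congr 1 <;> simp [hu', hv', vsub_eq_sub]
    rw [hδeq, InnerProductGeometry.cos_angle, hu, hv,
      real_inner_smul_left, real_inner_smul_right]
    field_simp
  have hcos2 : @inner ℝ _ _ u v = 2 * Real.cos (δ / 2) ^ 2 - 1 := by
    have h := Real.cos_sq (δ / 2)
    have h2 : 2 * (δ / 2) = δ := by ring
    rw [h2] at h
    nlinarith [h, hcosδ]
  have hnuv : ‖u + v‖ = 2 * Real.cos (δ / 2) :=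
    aux_norm_add u v hnu hnv _ hc0 hcos2
  have hb2d : dist b2 m ≥ ‖u'‖ - @inner ℝ _ _ (m - x) u := by
    have h := aux_proj x m u' hu'0
    have hx : x + u' = b2 := by rw [hu']; abel
    rw [hx] at h
    exact h
  have ht2d : dist t2 m ≥ ‖v'‖ - @inner ℝ _ _ (m - x) v := by
    have h := aux_proj x m v' hv'0
    have hx : x + v' = t2 := by rw [hv']; abel
    rw [hx] at h
    exact h
  have hCS : @inner ℝ _ _ (m - x) (u + v) ≤ ‖m - x‖ * (2 * Real.cos (δ / 2)) := by
    have := aux_CS (m - x) (u + v)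
    rw [hnuv] at this
    exact this
  have hsplit : @inner ℝ _ _ (m - x) u + @inner ℝ _ _ (m - x) v
      = @inner ℝ _ _ (m - x) (u + v) := aux_inner_split _ _ _
  have hPb : dist x b1 + dist b1 b2 = dist x b2 := dist_add_dist_of_mem_segment hb1
  have hPt : dist x t1 + dist t1 t2 = dist x t2 := dist_add_dist_of_mem_segment ht1
  have hRb : dist x b2 = ‖u'‖ := by rw [dist_eq_norm, hu', norm_sub_rev]
  have hRt : dist x t2 = ‖v'‖ := by rw [dist_eq_norm, hv', norm_sub_rev]
  have hmx1 : ‖m - x‖ ≤ dist b1 m + dist x b1 := by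
    rw [← dist_eq_norm]
    calc dist m x ≤ dist m b1 + dist b1 x := dist_triangle _ _ _
    _ = dist b1 m + dist x b1 := by rw [dist_comm m b1, dist_comm b1 x]
  have hmx2 : ‖m - x‖ ≤ dist t1 m + dist x t1 := by
    rw [← dist_eq_norm]
    calc dist m x ≤ dist m t1 + dist t1 x := dist_triangle _ _ _
    _ = dist t1 m + dist x t1 := by rw [dist_comm m t1, dist_comm t1 x]
  set A := dist b1 m with hA
  set B := dist t1 m with hB
  set D2 := dist b2 m with hD2
  set E2 := dist t2 m with hE2
  set P := dist x b1 with hP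
  set Q := dist x t1 with hQ
  set db := dist b1 b2 with hdb
  set dt := dist t1 t2 with hdt
  set N := ‖m - x‖ with hN
  set C := Real.cos (δ / 2) with hC
  set NU := ‖u'‖ with hNU
  set NV := ‖v'‖ with hNV
  set I1 := @inner ℝ _ _ (m - x) u with hI1
  set I2 := @inner ℝ _ _ (m - x) v with hI2
  set I3 := @inner ℝ _ _ (m - x) (u + v) with hI3
  set S := Real.sin (δ / 2) with hS
  have hA0 : 0 ≤ A := dist_nonneg
  have hB0 : 0 ≤ B := dist_nonneg
  have hP0 : 0 ≤ P := dist_nonneg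
  have hQ0 : 0 ≤ Q := dist_nonneg
  clear_value A B D2 E2 P Q db dt N C NU NV I1 I2 I3 S
  clear hI1 hI2 hI3 hA hB hD2 hE2 hP hQ hdb hdt hN hC hNU hNV hS
  clear hcosδ hcos2 hnuv hnu hnv hu'0 hv'0 hb1 ht1 hm hb2 ht2 hδ0 hδπ
  clear_value u v u' v'
  rw [hRb] at hPb
  rw [hRt] at hPt
  clear hu hv hu' hv' u v u' v' m hRb hRt
  clear_value δ
  clear δ x b1 b2 t1 t2
  have hmain : A + B + D2 + E2 - (db + dt) ≥ (1 - C) * (A + B) := by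
    have hmul : N * (2 * C) ≤ (A + P + (B + Q)) * C := by nlinarith [hmx1, hmx2, hc0]
    nlinarith [hb2d, ht2d, hCS, hsplit, hPb, hPt, hmul, hA0, hB0, hP0, hQ0]
  have hconst : ((1 - C) * S / (1 + S)) ≤ 1 - C := by
    rw [div_le_iff₀ (by linarith)]
    nlinarith
  nlinarith [hmain, hconst, hA0, hB0]
end

section
/- Let a, b, c be points in the Euclidean plane ℝ² with a ≠ c and b ≠ c, and let α := ∠(a, c, b). Then dist(a, b) ≥ sin(α/2) · (dist(a, c) + dist(c, b)). -/
open Real EuclideanGeometry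

theorem dist_ge_sin_half_angle
    (a b c : EuclideanSpace ℝ (Fin 2)) (ha : a ≠ c) (hb : b ≠ c) :
    dist a b ≥ Real.sin (EuclideanGeometry.angle a c b / 2) * (dist a c + dist c b) := by
  have h0 : 0 ≤ EuclideanGeometry.angle a c b := EuclideanGeometry.angle_nonneg a c b
  have hpi : EuclideanGeometry.angle a c b ≤ π := EuclideanGeometry.angle_le_pi a c b
  have h2 : -1 ≤ Real.cos (EuclideanGeometry.angle a c b) := Real.neg_one_le_cos _
  have hs : 0 ≤ Real.sin (EuclideanGeometry.angle a c b / 2) :=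
    Real.sin_nonneg_of_nonneg_of_le_pi (by linarith) (by linarith [Real.pi_pos])
  have hlaw := EuclideanGeometry.law_cos a c b
  have hdcb : dist c b = dist b c := dist_comm c b
  have key : (Real.sin (EuclideanGeometry.angle a c b / 2) * (dist a c + dist c b)) ^ 2
      ≤ dist a b ^ 2 := by
    have h2m : 2 * (EuclideanGeometry.angle a c b / 2) = EuclideanGeometry.angle a c b := by ring
    rw [mul_pow, Real.sin_sq_eq_half_sub, h2m, hdcb]
    nlinarith [sq_nonneg (dist a c - dist b c), dist_nonneg (x := a) (y := c),
      dist_nonneg (x := b) (y := c)]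
  nlinarith [dist_nonneg (x := a) (y := b), mul_nonneg hs
    (add_nonneg (dist_nonneg (x := a) (y := c)) (dist_nonneg (x := c) (y := b)))]
end

section
/- Let a, b, c, p be points in the Euclidean plane ℝ² with a ≠ c and b ≠ c, and let α := ∠(a, c, b). Then dist(a, p) + dist(p, b) ≥ (sin(α/2) / (1 + sin(α/2))) · (dist(a, c) + dist(c, b) + dist(a, p) + dist(p, b)). -/
open Real EuclideanGeometry

theorem dist_sum_ge_sin_half_angle_fraction
    (a b c p : EuclideanSpace ℝ (Fin 2)) (ha : a ≠ c) (hb : b ≠ c) :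
    dist a p + dist p b ≥
      (Real.sin (EuclideanGeometry.angle a c b / 2) /
          (1 + Real.sin (EuclideanGeometry.angle a c b / 2))) *
        (dist a c + dist c b + dist a p + dist p b) := by
  set α := EuclideanGeometry.angle a c b with hα
  set s := Real.sin (α / 2) with hs
  have hα0 : 0 ≤ α := EuclideanGeometry.angle_nonneg a c b
  have hαπ : α ≤ π := EuclideanGeometry.angle_le_pi a c b
  have hs0 : 0 ≤ s := Real.sin_nonneg_of_nonneg_of_le_pi (by linarith) (by linarith)
  have hs1 : s ≤ 1 := Real.sin_le_one _
  -- law of cosines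
  have hlc' := EuclideanGeometry.law_cos a c b
  have hdcb : dist b c = dist c b := dist_comm b c
  have hlc : dist a b ^ 2 =
      dist a c ^ 2 + dist c b ^ 2 - 2 * dist a c * dist c b * Real.cos α := by
    rw [hdcb] at hlc'; ring_nf; ring_nf at hlc'; linarith
  have hcos : Real.cos α = 1 - 2 * s ^ 2 := by
    have h2 := Real.sin_sq_eq_half_sub (α / 2)
    rw [← hs] at h2
    have : 2 * (α / 2) = α := by ring
    rw [this] at h2
    linarith
  have hkey : s * (dist a c + dist c b) ≤ dist a b := by
    have h1 : (s * (dist a c + dist c b)) ^ 2 ≤ dist a b ^ 2 := by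
      rw [hlc, hcos]
      have hac : 0 ≤ dist a c := dist_nonneg
      have hcb : 0 ≤ dist c b := dist_nonneg
      nlinarith [mul_nonneg (sub_nonneg.mpr (by nlinarith : s ^ 2 ≤ 1))
        (sq_nonneg (dist a c - dist c b))]
    have hab : 0 ≤ dist a b := dist_nonneg
    nlinarith [mul_nonneg hs0 (add_nonneg (dist_nonneg : (0:ℝ) ≤ dist a c)
      (dist_nonneg : (0:ℝ) ≤ dist c b))]
  have htri : dist a b ≤ dist a p + dist p b := dist_triangle a p b
  have hpos : 0 < 1 + s := by linarith
  rw [ge_iff_le, div_mul_eq_mul_div, div_le_iff₀ hpos]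
  nlinarith [mul_nonneg hs0 (add_nonneg (dist_nonneg : (0:ℝ) ≤ dist a p)
    (dist_nonneg : (0:ℝ) ≤ dist p b))]
end

section
/- Let t1, t2, m be points in the Euclidean plane ℝ² with t1 ≠ m and t1 ≠ t2, and let θ := ∠(m, t1, t2). Then dist(t1, m) + dist(m, t2) − dist(t1, t2) ≥ (1 − cos θ) · dist(t1, m). -/
open Real EuclideanGeometry

theorem triangle_detour_lower_bound
    (t1 t2 m : EuclideanSpace ℝ (Fin 2)) (hm : t1 ≠ m) (ht : t1 ≠ t2) :
    dist t1 m + dist m t2 - dist t1 t2 ≥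
      (1 - Real.cos (EuclideanGeometry.angle m t1 t2)) * dist t1 m := by
  have hlaw := EuclideanGeometry.law_cos m t1 t2
  have hc1 : Real.cos (EuclideanGeometry.angle m t1 t2) ≤ 1 := Real.cos_le_one _
  have hc2 : -1 ≤ Real.cos (EuclideanGeometry.angle m t1 t2) := Real.neg_one_le_cos _
  have h1 : dist m t1 = dist t1 m := dist_comm _ _
  have h2 : dist t2 t1 = dist t1 t2 := dist_comm _ _
  have hna : (0:ℝ) ≤ dist t1 m := dist_nonneg
  have hnb : (0:ℝ) ≤ dist t1 t2 := dist_nonneg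
  have hnc : (0:ℝ) ≤ dist m t2 := dist_nonneg
  rw [h1, h2] at hlaw
  set θ := EuclideanGeometry.angle m t1 t2
  have key : dist t1 m * dist t1 m * ((1 - Real.cos θ) * (1 + Real.cos θ)) ≥ 0 :=
    mul_nonneg (mul_nonneg hna hna)
      (mul_nonneg (by linarith) (by linarith))
  nlinarith [key, mul_nonneg hna hnc, sq_nonneg (dist m t2 - (dist t1 t2 - Real.cos θ * dist t1 m)),
    sq_nonneg (dist m t2 + (dist t1 t2 - Real.cos θ * dist t1 m))]
end

section
/- Let K ⊆ ℝ² be a nonempty compact convex set and let r ≥ 0. Define K_r := {x ∈ ℝ² : infDist(x, K) ≤ r}. Then K_r is a nonempty compact convex set and per(K_r) = per(K) + 2πr. -/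
/-
`{x | infDist x K ≤ r}` is the cthickening of `K`, which for compact `K` is the Minkowski sum
`K + closedBall 0 r`. The supremum of `⟪u, ·⟫` over a Minkowski sum is the sum of the suprema,
and for `‖u‖ = 1` it is `r` on `closedBall 0 r` (attained at `r • u`). So in every direction the
width `sup - inf` grows by exactly `2r`, and integrating over `θ ∈ [0, π]` adds `2πr`.
-/

open Real Set

noncomputable def per (S : Set (EuclideanSpace ℝ (Fin 2))) : ℝ :=
  ∫ θ in (0:ℝ)..π,
    (sSup ((fun p => p 0 * Real.cos θ + p 1 * Real.sin θ) '' S) -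
     sInf ((fun p => p 0 * Real.cos θ + p 1 * Real.sin θ) '' S))

def IsPartition (P P1 P2 : Set (EuclideanSpace ℝ (Fin 2))) : Prop :=
  P1.Nonempty ∧ P2.Nonempty ∧ Disjoint P1 P2 ∧ P1 ∪ P2 = P

def Separates (u : EuclideanSpace ℝ (Fin 2)) (c : ℝ)
    (P1 P2 : Set (EuclideanSpace ℝ (Fin 2))) : Prop :=
  (∀ p ∈ P1, (inner ℝ p u : ℝ) ≤ c) ∧ (∀ q ∈ P2, c ≤ (inner ℝ q u : ℝ))

/-- The separation distance between the convex hulls of `A` and `B`. -/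
noncomputable def sepDist (A B : Set (EuclideanSpace ℝ (Fin 2))) : ℝ :=
  sInf (Set.image2 dist (convexHull ℝ A) (convexHull ℝ B))

open Metric Pointwise RealInnerProductSpace MeasureTheory

section InnerProductSpace

variable {E : Type*} [NormedAddCommGroup E] [InnerProductSpace ℝ E] {u : E} {r : ℝ}

lemma isGreatest_inner_image_closedBall (hu : ‖u‖ = 1) (hr : 0 ≤ r) :
    IsGreatest (innerSL ℝ u '' closedBall 0 r) r := by
  refine ⟨⟨r • u, ?_, ?_⟩, ?_⟩
  · simp [norm_smul, hu, abs_of_nonneg hr]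
  · simp [hu]
  · rintro _ ⟨p, hp, rfl⟩
    calc ⟪u, p⟫ ≤ ‖u‖ * ‖p‖ := real_inner_le_norm u p
      _ ≤ r := by simpa [hu] using hp

lemma sSup_inner_image_cthickening {K : Set E} (hK : IsCompact K) (hne : K.Nonempty)
    (hu : ‖u‖ = 1) (hr : 0 ≤ r) :
    sSup (innerSL ℝ u '' cthickening r K) = sSup (innerSL ℝ u '' K) + r := by
  have hball := isGreatest_inner_image_closedBall hu hr
  rw [← hK.add_closedBall_zero hr, Set.image_add,
    csSup_add (hne.image _) (hK.bddAbove_image (innerSL ℝ u).continuous.continuousOn)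
      hball.nonempty hball.bddAbove, hball.csSup_eq]

lemma sInf_inner_image_eq_neg_sSup (u : E) (S : Set E) :
    sInf (innerSL ℝ u '' S) = -sSup (innerSL ℝ (-u) '' S) := by
  rw [← Real.sInf_neg, ← Set.image_neg_eq_neg, Set.image_image]
  simp

lemma sInf_inner_image_cthickening {K : Set E} (hK : IsCompact K) (hne : K.Nonempty)
    (hu : ‖u‖ = 1) (hr : 0 ≤ r) :
    sInf (innerSL ℝ u '' cthickening r K) = sInf (innerSL ℝ u '' K) - r := by
  rw [sInf_inner_image_eq_neg_sSup, sInf_inner_image_eq_neg_sSup,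
    sSup_inner_image_cthickening hK hne (by rwa [norm_neg]) hr, neg_add, sub_eq_add_neg]

end InnerProductSpace

noncomputable def dir (θ : ℝ) : EuclideanSpace ℝ (Fin 2) := !₂[cos θ, sin θ]

lemma norm_dir (θ : ℝ) : ‖dir θ‖ = 1 := by
  simp [dir, EuclideanSpace.norm_eq, Fin.sum_univ_two]

lemma coe_innerSL_dir (θ : ℝ) :
    ⇑(innerSL ℝ (dir θ)) = fun p : EuclideanSpace ℝ (Fin 2) => p 0 * cos θ + p 1 * sin θ := by
  ext p
  simp [dir, PiLp.inner_apply, Fin.sum_univ_two]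

lemma per_cthickening {K : Set (EuclideanSpace ℝ (Fin 2))} (hK : IsCompact K)
    (hne : K.Nonempty) {r : ℝ} (hr : 0 ≤ r) :
    per (cthickening r K) = per K + 2 * π * r := by
  let f : ℝ → EuclideanSpace ℝ (Fin 2) → ℝ := fun θ p => p 0 * cos θ + p 1 * sin θ
  have hwidth (θ : ℝ) :
      sSup (f θ '' cthickening r K) - sInf (f θ '' cthickening r K)
        = sSup (f θ '' K) - sInf (f θ '' K) + 2 * r := by
    simp only [f, ← coe_innerSL_dir, sSup_inner_image_cthickening hK hne (norm_dir θ) hr,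
      sInf_inner_image_cthickening hK hne (norm_dir θ) hr]
    ring
  have hf : Continuous ↿f := by fun_prop
  have hint : IntervalIntegrable (fun θ => sSup (f θ '' K) - sInf (f θ '' K)) volume 0 π :=
    ((hK.continuous_sSup hf).sub (hK.continuous_sInf hf)).intervalIntegrable 0 π
  change ∫ θ in (0:ℝ)..π, (sSup (f θ '' cthickening r K) - sInf (f θ '' cthickening r K))
    = (∫ θ in (0:ℝ)..π, (sSup (f θ '' K) - sInf (f θ '' K))) + 2 * π * r
  rw [intervalIntegral.integral_congr fun θ _ => hwidth θ,
    intervalIntegral.integral_add hint intervalIntegrable_const, intervalIntegral.integral_const,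
    sub_zero, smul_eq_mul]
  ring

lemma setOf_infDist_le_eq_cthickening {X : Type*} [PseudoMetricSpace X] {K : Set X}
    (hne : K.Nonempty) {r : ℝ} (hr : 0 ≤ r) :
    {x | infDist x K ≤ r} = cthickening r K := by
  ext x
  rw [mem_cthickening_iff, mem_ofPred_eq, infDist,
    ← ENNReal.le_ofReal_iff_toReal_le (infEDist_ne_top hne) hr]

theorem per_neighborhood_of_convex
    (K : Set (EuclideanSpace ℝ (Fin 2))) (hne : K.Nonempty)
    (hK : IsCompact K) (hconv : Convex ℝ K) (r : ℝ) (hr : 0 ≤ r) :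
    ({x : EuclideanSpace ℝ (Fin 2) | Metric.infDist x K ≤ r}).Nonempty ∧
    IsCompact {x : EuclideanSpace ℝ (Fin 2) | Metric.infDist x K ≤ r} ∧
    Convex ℝ {x : EuclideanSpace ℝ (Fin 2) | Metric.infDist x K ≤ r} ∧
    per {x : EuclideanSpace ℝ (Fin 2) | Metric.infDist x K ≤ r} = per K + 2 * π * r := by
  rw [setOf_infDist_le_eq_cthickening hne hr]
  exact ⟨hne.mono (self_subset_cthickening K), hK.cthickening, hconv.cthickening r,
    per_cthickening hK hne hr⟩
end

section
/- Let P be a finite set of points in ℝ², let P̂ ⊆ P be nonempty, let r ≥ 0, and let f : P → P̂ be a map with f(p) = p for every p ∈ P̂ and dist(p, f(p)) ≤ r for every p ∈ P. Let (P̂1, P̂2) be a partition of P̂ into two nonempty disjoint subsets with P̂1 ∪ P̂2 = P̂, and define P_i := {p ∈ P : f(p) ∈ P̂_i} for i = 1, 2. Then per(P1) + per(P2) ≤ per(P̂1) + per(P̂2) + 4πr. -/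
open Real Set

/-!
For every direction θ, each point of `Pᵢ` lies within `r` of its image in `P̂ᵢ`, so the width of
`Pᵢ` in direction θ exceeds that of `P̂ᵢ` by at most `2r` (as long as `Pᵢ` is nonempty, which
holds because `f` fixes `P̂ᵢ ⊆ Pᵢ`). Integrating over `θ ∈ [0, π]` in Cauchy's formula gives
`per Pᵢ ≤ per P̂ᵢ + 2πr`, and the two inequalities add up.
-/

section ImageBounds

variable {X : Type*} [PseudoMetricSpace X] {φ : X → ℝ} {S T : Set X} {r : ℝ}

theorem csSup_image_le_add_of_lipschitzWith_one (hφ : LipschitzWith 1 φ) (hS : S.Nonempty)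
    (hT : BddAbove (φ '' T)) (hST : ∀ p ∈ S, ∃ q ∈ T, dist p q ≤ r) :
    sSup (φ '' S) ≤ sSup (φ '' T) + r := by
  refine csSup_le (hS.image φ) ?_
  rintro _ ⟨p, hp, rfl⟩
  obtain ⟨q, hq, hpq⟩ := hST p hp
  have hφpq := hφ.le_add_mul p q
  have hφq : φ q ≤ sSup (φ '' T) := le_csSup hT (mem_image_of_mem φ hq)
  simp only [NNReal.coe_one, one_mul] at hφpq
  linarith

theorem sub_le_csInf_image_of_lipschitzWith_one (hφ : LipschitzWith 1 φ) (hS : S.Nonempty)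
    (hT : BddBelow (φ '' T)) (hST : ∀ p ∈ S, ∃ q ∈ T, dist p q ≤ r) :
    sInf (φ '' T) - r ≤ sInf (φ '' S) := by
  refine le_csInf (hS.image φ) ?_
  rintro _ ⟨p, hp, rfl⟩
  obtain ⟨q, hq, hpq⟩ := hST p hp
  have hφqp := hφ.le_add_mul q p
  have hφq : sInf (φ '' T) ≤ φ q := csInf_le hT (mem_image_of_mem φ hq)
  simp only [NNReal.coe_one, one_mul, dist_comm q p] at hφqp
  linarith

end ImageBounds

section FiniteImage

variable {α X : Type*} [TopologicalSpace α] {S : Set X} {φ : α → X → ℝ}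

theorem Set.Finite.continuous_csSup_image (hS : S.Finite) (hne : S.Nonempty)
    (hφ : ∀ p ∈ S, Continuous (φ · p)) : Continuous fun a => sSup (φ a '' S) := by
  have hne' : hS.toFinset.Nonempty := hS.toFinset_nonempty.mpr hne
  have hsup : ∀ a, sSup (φ a '' S) = hS.toFinset.sup' hne' (φ a) := fun a => by
    rw [Finset.sup'_eq_csSup_image, hS.coe_toFinset]
  simp only [hsup]
  exact Continuous.finset_sup'_apply hne' fun p hp => hφ p (hS.mem_toFinset.mp hp)

theorem Set.Finite.continuous_csInf_image (hS : S.Finite) (hne : S.Nonempty)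
    (hφ : ∀ p ∈ S, Continuous (φ · p)) : Continuous fun a => sInf (φ a '' S) := by
  have hne' : hS.toFinset.Nonempty := hS.toFinset_nonempty.mpr hne
  have hinf : ∀ a, sInf (φ a '' S) = hS.toFinset.inf' hne' (φ a) := fun a => by
    rw [Finset.inf'_eq_csInf_image, hS.coe_toFinset]
  simp only [hinf]
  exact Continuous.finset_inf'_apply hne' fun p hp => hφ p (hS.mem_toFinset.mp hp)

end FiniteImage

noncomputable def projAngle (θ : ℝ) (p : EuclideanSpace ℝ (Fin 2)) : ℝ :=
  p 0 * cos θ + p 1 * sin θ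

noncomputable def directionalWidth (S : Set (EuclideanSpace ℝ (Fin 2))) (θ : ℝ) : ℝ :=
  sSup (projAngle θ '' S) - sInf (projAngle θ '' S)

theorem per_eq_integral_directionalWidth (S : Set (EuclideanSpace ℝ (Fin 2))) :
    per S = ∫ θ in (0 : ℝ)..π, directionalWidth S θ :=
  rfl

theorem lipschitzWith_one_projAngle (θ : ℝ) : LipschitzWith 1 (projAngle θ) := by
  refine LipschitzWith.of_le_add fun p q => ?_
  have hsq : (projAngle θ p - projAngle θ q) ^ 2 ≤ (p 0 - q 0) ^ 2 + (p 1 - q 1) ^ 2 := by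
    unfold projAngle
    nlinarith [sin_sq_add_cos_sq θ, sq_nonneg ((p 0 - q 0) * sin θ - (p 1 - q 1) * cos θ)]
  have hdist : dist p q = √((p 0 - q 0) ^ 2 + (p 1 - q 1) ^ 2) := by
    simp [EuclideanSpace.dist_eq, Fin.sum_univ_two, Real.dist_eq, sq_abs]
  linarith [le_abs_self (projAngle θ p - projAngle θ q), abs_le_sqrt hsq]

theorem continuous_directionalWidth {S : Set (EuclideanSpace ℝ (Fin 2))} (hS : S.Finite)
    (hne : S.Nonempty) : Continuous (directionalWidth S) := by
  have hproj : ∀ p ∈ S, Continuous (projAngle · p) := fun p _ => by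
    unfold projAngle
    fun_prop
  exact (hS.continuous_csSup_image hne hproj).sub (hS.continuous_csInf_image hne hproj)

variable {S T : Set (EuclideanSpace ℝ (Fin 2))} {r : ℝ}

theorem directionalWidth_le_add (hS : S.Nonempty) (hT : T.Finite)
    (hST : ∀ p ∈ S, ∃ q ∈ T, dist p q ≤ r) (θ : ℝ) :
    directionalWidth S θ ≤ directionalWidth T θ + 2 * r := by
  have hsup := csSup_image_le_add_of_lipschitzWith_one (lipschitzWith_one_projAngle θ) hS
    (hT.image _).bddAbove hST
  have hinf := sub_le_csInf_image_of_lipschitzWith_one (lipschitzWith_one_projAngle θ) hS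
    (hT.image _).bddBelow hST
  unfold directionalWidth
  linarith

theorem per_le_per_add (hS : S.Finite) (hSne : S.Nonempty) (hT : T.Finite) (hTne : T.Nonempty)
    (hST : ∀ p ∈ S, ∃ q ∈ T, dist p q ≤ r) :
    per S ≤ per T + 2 * π * r := by
  have hTint : IntervalIntegrable (directionalWidth T) MeasureTheory.volume 0 π :=
    (continuous_directionalWidth hT hTne).intervalIntegrable 0 π
  calc per S ≤ ∫ θ in (0 : ℝ)..π, (directionalWidth T θ + 2 * r) :=
        intervalIntegral.integral_mono_on pi_pos.le
          ((continuous_directionalWidth hS hSne).intervalIntegrable 0 π)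
          (hTint.add intervalIntegrable_const) fun θ _ => directionalWidth_le_add hSne hT hST θ
    _ = per T + 2 * π * r := by
      rw [intervalIntegral.integral_add hTint intervalIntegrable_const,
        intervalIntegral.integral_const, smul_eq_mul, per_eq_integral_directionalWidth]
      ring

theorem per_partition_of_rounding_general
    (P Phat P1hat P2hat : Set (EuclideanSpace ℝ (Fin 2)))
    (hfin : P.Finite) (hsub : Phat ⊆ P)
    (r : ℝ)
    (f : EuclideanSpace ℝ (Fin 2) → EuclideanSpace ℝ (Fin 2))
    (hfix : ∀ p ∈ Phat, f p = p)
    (hdist : ∀ p ∈ P, dist p (f p) ≤ r)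
    (hpart : IsPartition Phat P1hat P2hat) :
    per {p ∈ P | f p ∈ P1hat} + per {p ∈ P | f p ∈ P2hat} ≤
      per P1hat + per P2hat + 4 * π * r := by
  obtain ⟨h1ne, h2ne, -, huni⟩ := hpart
  have per_fiber_le : ∀ Q ⊆ Phat, Q.Nonempty →
      per {p ∈ P | f p ∈ Q} ≤ per Q + 2 * π * r := by
    rintro Q hQ ⟨q, hq⟩
    have hq_fiber : q ∈ {p ∈ P | f p ∈ Q} := ⟨hsub (hQ hq), (hfix q (hQ hq)).symm ▸ hq⟩
    exact per_le_per_add (hfin.subset (sep_subset P _)) ⟨q, hq_fiber⟩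
      (hfin.subset (hQ.trans hsub)) ⟨q, hq⟩ fun p hp => ⟨f p, hp.2, hdist p hp.1⟩
  have h1 := per_fiber_le P1hat (huni ▸ subset_union_left) h1ne
  have h2 := per_fiber_le P2hat (huni ▸ subset_union_right) h2ne
  linarith

theorem per_partition_of_rounding
    (P Phat P1hat P2hat : Set (EuclideanSpace ℝ (Fin 2)))
    (hfin : P.Finite) (hsub : Phat ⊆ P) (hne : Phat.Nonempty)
    (r : ℝ) (hr : 0 ≤ r)
    (f : EuclideanSpace ℝ (Fin 2) → EuclideanSpace ℝ (Fin 2))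
    (hmap : ∀ p ∈ P, f p ∈ Phat)
    (hfix : ∀ p ∈ Phat, f p = p)
    (hdist : ∀ p ∈ P, dist p (f p) ≤ r)
    (hpart : IsPartition Phat P1hat P2hat) :
    per {p ∈ P | f p ∈ P1hat} + per {p ∈ P | f p ∈ P2hat} ≤
      per P1hat + per P2hat + 4 * π * r :=
  per_partition_of_rounding_general P Phat P1hat P2hat hfin hsub r f hfix hdist hpart
end

section
/- Let w > 0 and 0 < h ≤ w/8, and let P be a finite set of points contained in the rectangle [0, w] × [0, h] such that P contains a point with first coordinate 0 and a point with first coordinate w, and no point of P has first coordinate in the open interval (w/4, 3w/4). Let A := {p ∈ P : p₁ ≤ w/4} and B := {p ∈ P : p₁ ≥ 3w/4}. Then A and B are nonempty, A ∪ B = P, and for every partition (Q1, Q2) of P into two nonempty disjoint subsets with Q1 ∪ Q2 = P one has per(A) + per(B) ≤ per(Q1) + per(Q2). -/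
open Real Set

/-!
The two clusters lie in boxes of size `w/4 × h`, so `per A + per B ≤ 2 (w/2 + 2h) ≤ 3w/2`,
while a set containing two points at horizontal distance `d` has perimeter at least `2d`.
Let `l`, `r` be points of `P` with first coordinates `0` and `w`. If they lie in the same part,
that part has perimeter at least `2w`. Otherwise, say `l ∈ Q1` and `r ∈ Q2`; unless
`(Q1, Q2) = (A, B)`, either `Q1` meets `B` or `Q2` meets `A`, and that part has perimeter at
least `2 · 3w/4`.
-/

local notation "E2" => EuclideanSpace ℝ (Fin 2)

noncomputable def proj (θ : ℝ) (p : E2) : ℝ := p 0 * cos θ + p 1 * sin θ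

noncomputable def width (S : Set E2) (θ : ℝ) : ℝ :=
  sSup (proj θ '' S) - sInf (proj θ '' S)

theorem per_eq_integral_width (S : Set E2) : per S = ∫ θ in (0:ℝ)..π, width S θ := rfl

section Width

variable {S : Set E2}

theorem continuous_width (hS : S.Finite) (hne : S.Nonempty) : Continuous (width S) := by
  lift S to Finset E2 using hS
  have hne' : S.Nonempty := Finset.coe_nonempty.mp hne
  have hwidth : width S = fun θ => S.sup' hne' (proj θ) - S.inf' hne' (proj θ) := by
    ext θ
    rw [width, Finset.sup'_eq_csSup_image, Finset.inf'_eq_csInf_image]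
  rw [hwidth]
  have hproj : ∀ p ∈ S, Continuous fun θ => proj θ p := fun p _ => by unfold proj; fun_prop
  exact (Continuous.finset_sup'_apply hne' hproj).sub (Continuous.finset_inf'_apply hne' hproj)

theorem proj_sub_proj_le_width (hS : S.Finite) {p q : E2} (hp : p ∈ S) (hq : q ∈ S) (θ : ℝ) :
    proj θ q - proj θ p ≤ width S θ :=
  sub_le_sub (le_csSup (hS.image _).bddAbove ⟨q, hq, rfl⟩)
    (csInf_le (hS.image _).bddBelow ⟨p, hp, rfl⟩)

theorem exists_width_eq (hS : S.Finite) (hne : S.Nonempty) (θ : ℝ) :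
    ∃ p ∈ S, ∃ q ∈ S, width S θ = proj θ q - proj θ p := by
  obtain ⟨q, hq, hq'⟩ := (hne.image (proj θ)).csSup_mem (hS.image _)
  obtain ⟨p, hp, hp'⟩ := (hne.image (proj θ)).csInf_mem (hS.image _)
  exact ⟨p, hp, q, hq, by rw [width, ← hq', ← hp']⟩

end Width

theorem integral_abs_cos : ∫ θ in (0:ℝ)..π, |cos θ| = 2 := by
  have hcont : Continuous fun θ => |cos θ| := by fun_prop
  have hleft : ∫ θ in (0:ℝ)..π / 2, |cos θ| = 1 := by
    rw [intervalIntegral.integral_congr (g := cos), integral_cos]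
    · simp
    intro θ hθ
    rw [Set.uIcc_of_le (by positivity)] at hθ
    exact abs_of_nonneg (cos_nonneg_of_mem_Icc ⟨by linarith [hθ.1, pi_pos], hθ.2⟩)
  have hright : ∫ θ in π / 2..π, |cos θ| = 1 := by
    rw [intervalIntegral.integral_congr (g := fun θ => -cos θ), intervalIntegral.integral_neg,
      integral_cos]
    · simp
    intro θ hθ
    rw [Set.uIcc_of_le (by linarith [pi_pos])] at hθ
    exact abs_of_nonpos (cos_nonpos_of_pi_div_two_le_of_le hθ.1 (by linarith [hθ.2, pi_pos]))
  rw [← intervalIntegral.integral_add_adjacent_intervals (b := π / 2)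
    (hcont.intervalIntegrable _ _) (hcont.intervalIntegrable _ _), hleft, hright]
  norm_num

/-- Reflecting `θ ↦ π - θ` and adding, the `b sin θ` terms cancel in the triangle inequality. -/
theorem two_mul_abs_le_integral_abs (a b : ℝ) :
    2 * |a| ≤ ∫ θ in (0:ℝ)..π, |a * cos θ + b * sin θ| := by
  have hrefl : ∫ θ in (0:ℝ)..π, |-(a * cos θ) + b * sin θ| =
      ∫ θ in (0:ℝ)..π, |a * cos θ + b * sin θ| := by
    simpa using intervalIntegral.integral_comp_sub_left (a := 0) (b := π)
      (fun θ => |a * cos θ + b * sin θ|) π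
  have hpointwise : ∀ θ ∈ Set.Icc (0:ℝ) π,
      2 * |a| * |cos θ| ≤ |a * cos θ + b * sin θ| + |-(a * cos θ) + b * sin θ| := by
    intro θ _
    calc 2 * |a| * |cos θ| = |(a * cos θ + b * sin θ) - (-(a * cos θ) + b * sin θ)| := by
          rw [← abs_two, ← abs_mul, ← abs_mul]; ring_nf
      _ ≤ _ := abs_sub _ _
  have hmono := intervalIntegral.integral_mono_on (μ := MeasureTheory.volume) pi_pos.le
    (Continuous.intervalIntegrable (by fun_prop) _ _)
    (Continuous.intervalIntegrable (by fun_prop) _ _) hpointwise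
  rw [intervalIntegral.integral_const_mul, integral_abs_cos,
    intervalIntegral.integral_add (Continuous.intervalIntegrable (by fun_prop) _ _)
    (Continuous.intervalIntegrable (by fun_prop) _ _), hrefl] at hmono
  linarith

section Perimeter

variable {S : Set E2}

theorem two_mul_abs_sub_le_per (hS : S.Finite) {p q : E2} (hp : p ∈ S) (hq : q ∈ S) :
    2 * |q 0 - p 0| ≤ per S :=
  calc 2 * |q 0 - p 0|
      ≤ ∫ θ in (0:ℝ)..π, |(q 0 - p 0) * cos θ + (q 1 - p 1) * sin θ| :=
        two_mul_abs_le_integral_abs _ _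
    _ ≤ ∫ θ in (0:ℝ)..π, width S θ := by
        refine intervalIntegral.integral_mono_on pi_pos.le
          (Continuous.intervalIntegrable (by fun_prop) _ _)
          ((continuous_width hS ⟨p, hp⟩).intervalIntegrable _ _) fun θ _ => abs_le.mpr ⟨?_, ?_⟩
        · linarith [proj_sub_proj_le_width hS hq hp θ, show proj θ p - proj θ q =
            -((q 0 - p 0) * cos θ + (q 1 - p 1) * sin θ) by unfold proj; ring]
        · linarith [proj_sub_proj_le_width hS hp hq θ, show proj θ q - proj θ p =
            (q 0 - p 0) * cos θ + (q 1 - p 1) * sin θ by unfold proj; ring]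
    _ = per S := (per_eq_integral_width S).symm

theorem per_nonneg (hS : S.Finite) (hne : S.Nonempty) : 0 ≤ per S := by
  obtain ⟨p, hp⟩ := hne
  simpa using two_mul_abs_sub_le_per hS hp hp

theorem per_le_of_sub_le (hS : S.Finite) (hne : S.Nonempty) {W H : ℝ}
    (hW : ∀ p ∈ S, ∀ q ∈ S, q 0 - p 0 ≤ W) (hH : ∀ p ∈ S, ∀ q ∈ S, q 1 - p 1 ≤ H) :
    per S ≤ 2 * W + 2 * H := by
  have hpointwise : ∀ θ ∈ Set.Icc (0:ℝ) π, width S θ ≤ W * |cos θ| + H * sin θ := by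
    intro θ hθ
    obtain ⟨p, hp, q, hq, hpq⟩ := exists_width_eq hS hne θ
    have hx : |q 0 - p 0| ≤ W := abs_sub_le_iff.mpr ⟨hW p hp q hq, hW q hq p hp⟩
    have hsin : 0 ≤ sin θ := sin_nonneg_of_nonneg_of_le_pi hθ.1 hθ.2
    calc width S θ = (q 0 - p 0) * cos θ + (q 1 - p 1) * sin θ := by rw [hpq, proj, proj]; ring
      _ ≤ |q 0 - p 0| * |cos θ| + (q 1 - p 1) * sin θ := by
          rw [← abs_mul]; gcongr; exact le_abs_self _
      _ ≤ W * |cos θ| + H * sin θ := by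
          gcongr
          exact hH p hp q hq
  rw [per_eq_integral_width]
  calc ∫ θ in (0:ℝ)..π, width S θ ≤ ∫ θ in (0:ℝ)..π, (W * |cos θ| + H * sin θ) :=
        intervalIntegral.integral_mono_on pi_pos.le
          ((continuous_width hS hne).intervalIntegrable _ _)
          (Continuous.intervalIntegrable (by fun_prop) _ _) hpointwise
    _ = 2 * W + 2 * H := by
        rw [intervalIntegral.integral_add (Continuous.intervalIntegrable (by fun_prop) _ _)
          (Continuous.intervalIntegrable (by fun_prop) _ _),
          intervalIntegral.integral_const_mul, intervalIntegral.integral_const_mul,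
          integral_abs_cos, integral_sin]
        norm_num
        ring

end Perimeter

theorem per_sep_add_per_sep_le {w h : ℝ} {P : Set E2} (hfin : P.Finite)
    (hbox : ∀ p ∈ P, p 0 ∈ Set.Icc 0 w ∧ p 1 ∈ Set.Icc 0 h)
    (hA : ({p ∈ P | p 0 ≤ w / 4}).Nonempty) (hB : ({p ∈ P | 3 * w / 4 ≤ p 0}).Nonempty) :
    per {p ∈ P | p 0 ≤ w / 4} + per {p ∈ P | 3 * w / 4 ≤ p 0} ≤ w + 4 * h := by
  have hy : ∀ S ⊆ P, ∀ p ∈ S, ∀ q ∈ S, q 1 - p 1 ≤ h := fun S hS p hp q hq => by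
    linarith [(hbox p (hS hp)).2.1, (hbox q (hS hq)).2.2]
  have hperA := per_le_of_sub_le (hfin.sep _) hA (W := w / 4)
    (fun p hp q hq => by linarith [(hbox p hp.1).1.1, hq.2]) (hy _ (Set.sep_subset _ _))
  have hperB := per_le_of_sub_le (hfin.sep _) hB (W := w / 4)
    (fun p hp q hq => by linarith [(hbox q hq.1).1.2, hp.2]) (hy _ (Set.sep_subset _ _))
  linarith

theorem Set.eq_and_eq_of_union_eq_union {α : Type*} {Q₁ Q₂ A B : Set α}
    (h : Q₁ ∪ Q₂ = A ∪ B) (h₁ : Disjoint Q₁ B) (h₂ : Disjoint Q₂ A) : Q₁ = A ∧ Q₂ = B := by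
  rw [Set.disjoint_left] at h₁ h₂
  constructor <;> ext x <;> have hx := Set.ext_iff.mp h x <;> grind

theorem eq_and_eq_or_le_per_add_per {A B Q₁ Q₂ : Set E2} {l r : E2} {c : ℝ}
    (h₁ : Q₁.Finite) (h₂ : Q₂.Finite) (hQ : Q₁ ∪ Q₂ = A ∪ B) (hl : l ∈ Q₁) (hr : r ∈ Q₂)
    (hlB : ∀ b ∈ B, c ≤ 2 * (b 0 - l 0)) (hrA : ∀ a ∈ A, c ≤ 2 * (r 0 - a 0)) :
    (Q₁ = A ∧ Q₂ = B) ∨ c ≤ per Q₁ + per Q₂ := by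
  by_cases hB : Disjoint Q₁ B
  · by_cases hA : Disjoint Q₂ A
    · exact .inl (Set.eq_and_eq_of_union_eq_union hQ hB hA)
    · obtain ⟨a, ha, haA⟩ := Set.not_disjoint_iff.mp hA
      refine .inr ?_
      linarith [hrA a haA, two_mul_abs_sub_le_per h₂ ha hr, per_nonneg h₁ ⟨l, hl⟩,
        le_abs_self (r 0 - a 0)]
  · obtain ⟨b, hb, hbB⟩ := Set.not_disjoint_iff.mp hB
    refine .inr ?_
    linarith [hlB b hbB, two_mul_abs_sub_le_per h₁ hl hb, per_nonneg h₂ ⟨r, hr⟩,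
      le_abs_self (b 0 - l 0)]

theorem flat_rectangle_optimal_partition_general
    (w h : ℝ) (hhw : h ≤ w / 8)
    (P : Set (EuclideanSpace ℝ (Fin 2))) (hfin : P.Finite)
    (hbox : ∀ p ∈ P, p 0 ∈ Set.Icc 0 w ∧ p 1 ∈ Set.Icc 0 h)
    (hleft : ∃ p ∈ P, p 0 = 0) (hright : ∃ p ∈ P, p 0 = w)
    (hgap : ∀ p ∈ P, p 0 ∉ Set.Ioo (w / 4) (3 * w / 4)) :
    ({p ∈ P | p 0 ≤ w / 4}).Nonempty ∧
    ({p ∈ P | 3 * w / 4 ≤ p 0}).Nonempty ∧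
    {p ∈ P | p 0 ≤ w / 4} ∪ {p ∈ P | 3 * w / 4 ≤ p 0} = P ∧
    ∀ Q1 Q2 : Set (EuclideanSpace ℝ (Fin 2)), IsPartition P Q1 Q2 →
      per {p ∈ P | p 0 ≤ w / 4} + per {p ∈ P | 3 * w / 4 ≤ p 0} ≤ per Q1 + per Q2 := by
  set A := {p ∈ P | p 0 ≤ w / 4}
  set B := {p ∈ P | 3 * w / 4 ≤ p 0}
  obtain ⟨l, hlP, hl0⟩ := hleft
  obtain ⟨r, hrP, hr0⟩ := hright
  have hw : 0 ≤ w := hr0 ▸ (hbox r hrP).1.1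
  have hAB : A ∪ B = P := by
    rw [← Set.sep_or, Set.sep_eq_self_iff_mem_true]
    intro p hp
    by_contra! hmid
    exact hgap p hp hmid
  have hAne : A.Nonempty := ⟨l, hlP, by linarith⟩
  have hBne : B.Nonempty := ⟨r, hrP, by linarith⟩
  have hper : per A + per B ≤ 3 * w / 2 := by linarith [per_sep_add_per_sep_le hfin hbox hAne hBne]
  refine ⟨hAne, hBne, hAB, ?_⟩
  rintro Q1 Q2 ⟨hQ1, hQ2, -, hQ⟩
  have h1 : Q1.Finite := hfin.subset (hQ ▸ Set.subset_union_left)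
  have h2 : Q2.Finite := hfin.subset (hQ ▸ Set.subset_union_right)
  have hlB : ∀ b ∈ B, 3 * w / 2 ≤ 2 * (b 0 - l 0) := fun b hb => by linarith [hb.2]
  have hrA : ∀ a ∈ A, 3 * w / 2 ≤ 2 * (r 0 - a 0) := fun a ha => by linarith [ha.2]
  have hlr : 3 * w / 2 ≤ 2 * |r 0 - l 0| := by rw [hl0, hr0, sub_zero, abs_of_nonneg hw]; linarith
  rcases (hQ ▸ hlP : l ∈ Q1 ∪ Q2) with hl | hl <;> rcases (hQ ▸ hrP : r ∈ Q1 ∪ Q2) with hr | hr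
  · linarith [two_mul_abs_sub_le_per h1 hl hr, per_nonneg h2 hQ2]
  · rcases eq_and_eq_or_le_per_add_per h1 h2 (hQ.trans hAB.symm) hl hr hlB hrA with
      ⟨rfl, rfl⟩ | hc
    · exact le_rfl
    · linarith
  · rcases eq_and_eq_or_le_per_add_per h2 h1 ((Set.union_comm _ _).trans (hQ.trans hAB.symm))
      hl hr hlB hrA with ⟨rfl, rfl⟩ | hc
    · exact (add_comm _ _).le
    · linarith
  · linarith [two_mul_abs_sub_le_per h2 hl hr, per_nonneg h1 hQ1]

theorem flat_rectangle_optimal_partition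
    (w h : ℝ) (hw : 0 < w) (hh : 0 < h) (hhw : h ≤ w / 8)
    (P : Set (EuclideanSpace ℝ (Fin 2))) (hfin : P.Finite)
    (hbox : ∀ p ∈ P, p 0 ∈ Set.Icc 0 w ∧ p 1 ∈ Set.Icc 0 h)
    (hleft : ∃ p ∈ P, p 0 = 0) (hright : ∃ p ∈ P, p 0 = w)
    (hgap : ∀ p ∈ P, p 0 ∉ Set.Ioo (w / 4) (3 * w / 4)) :
    ({p ∈ P | p 0 ≤ w / 4}).Nonempty ∧
    ({p ∈ P | 3 * w / 4 ≤ p 0}).Nonempty ∧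
    {p ∈ P | p 0 ≤ w / 4} ∪ {p ∈ P | 3 * w / 4 ≤ p 0} = P ∧
    ∀ Q1 Q2 : Set (EuclideanSpace ℝ (Fin 2)), IsPartition P Q1 Q2 →
      per {p ∈ P | p 0 ≤ w / 4} + per {p ∈ P | 3 * w / 4 ≤ p 0} ≤ per Q1 + per Q2 :=
  flat_rectangle_optimal_partition_general w h hhw P hfin hbox hleft hright hgap
end
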